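/- arXiv:1909.09772 — 5 statements merged into one kernel-verified Lean document; each statement's English description precedes it below -/
import Mathlib

section
/- Let X, Y be finite metric spaces, and suppose there exists a d-bounded curvature K ∈ K_n(X) with d > 0 and n > |Y|. Then the Hausdorff distance (with respect to the l∞ matrix distance) between K_n(X) and K_n(Y) is at least d. -/
/-- The `n`-th curvature set of a metric space `X`: all `n × n` matrices of pairwise
distances of `n`-tuples of points of `X` (as elements of `Fin n → Fin n → ℝ`, which
carries the sup (`l∞`) metric). -/
def curvatureSet (X : Type*) [MetricSpace X] (n : ℕ) : Set (Fin n → Fin n → ℝ) :=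
  {A | ∃ x : Fin n → X, A = fun i j => dist (x i) (x j)}

/-!
If `n > |Y|`, every `n`-tuple `y` in `Y` repeats a point, `y i = y j` with `i ≠ j`, so its
curvature has a zero in position `(i, j)`, where the curvature of a `d`-bounded tuple `x` in `X`
has an entry `≥ d`. Hence the curvature of `x` lies at `l∞`-distance `≥ d` from all of `K_n(Y)`,
and the Hausdorff distance, which dominates this distance, is `≥ d`.
-/

open Metric

def curvature {ι X : Type*} [PseudoMetricSpace X] (x : ι → X) : ι → ι → ℝ :=
  fun i j => dist (x i) (x j)

section Curvature

variable {ι X Y : Type*} [Fintype ι] [PseudoMetricSpace X] [PseudoMetricSpace Y]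

theorem abs_dist_sub_dist_le_dist_curvature (x : ι → X) (y : ι → Y) (i j : ι) :
    |dist (x i) (x j) - dist (y i) (y j)| ≤ dist (curvature x) (curvature y) :=
  calc |dist (x i) (x j) - dist (y i) (y j)| = dist (curvature x i j) (curvature y i j) :=
        (Real.dist_eq _ _).symm
    _ ≤ dist (curvature x i) (curvature y i) := dist_le_pi_dist _ _ j
    _ ≤ dist (curvature x) (curvature y) := dist_le_pi_dist _ _ i

theorem dist_le_dist_curvature_of_eq (x : ι → X) (y : ι → Y) {i j : ι} (hy : y i = y j) :
    dist (x i) (x j) ≤ dist (curvature x) (curvature y) := by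
  simpa [hy, abs_of_nonneg dist_nonneg] using abs_dist_sub_dist_le_dist_curvature x y i j

end Curvature

theorem curvature_mem_curvatureSet {X : Type*} [MetricSpace X] {n : ℕ} (x : Fin n → X) :
    curvature x ∈ curvatureSet X n :=
  ⟨x, rfl⟩

theorem curvatureSet_eq_range (X : Type*) [MetricSpace X] (n : ℕ) :
    curvatureSet X n = Set.range (curvature : (Fin n → X) → _) := by
  ext A
  exact exists_congr fun _ => eq_comm

theorem curvatureSet_finite (X : Type*) [MetricSpace X] [Finite X] (n : ℕ) :
    (curvatureSet X n).Finite :=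
  curvatureSet_eq_range X n ▸ Set.finite_range _

theorem curvatureSet_nonempty (X : Type*) [MetricSpace X] [Nonempty X] (n : ℕ) :
    (curvatureSet X n).Nonempty :=
  ⟨_, curvature_mem_curvatureSet fun _ => Classical.arbitrary X⟩

theorem le_infDist_curvatureSet_of_card_lt {X Y : Type*} [MetricSpace X] [MetricSpace Y]
    [Fintype Y] [Nonempty Y] {n : ℕ} {d : ℝ} (x : Fin n → X)
    (hx : ∀ i j : Fin n, i ≠ j → d ≤ dist (x i) (x j)) (hn : Fintype.card Y < n) :
    d ≤ infDist (curvature x) (curvatureSet Y n) := by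
  rw [le_infDist (curvatureSet_nonempty Y n)]
  rintro _ ⟨y, rfl⟩
  obtain ⟨i, j, hij, hy⟩ := Fintype.exists_ne_map_eq_of_card_lt y (by simpa using hn)
  exact (hx i j hij).trans (dist_le_dist_curvature_of_eq x y hy)

theorem stmt_11_general {X Y : Type*} [MetricSpace X] [MetricSpace Y]
    [Fintype X] [Fintype Y] [Nonempty Y] {n : ℕ} {d : ℝ}
    (x : Fin n → X) (hK : ∀ i j : Fin n, i ≠ j → d ≤ dist (x i) (x j))
    (hn : Fintype.card Y < n) :
    d ≤ Metric.hausdorffDist (curvatureSet X n) (curvatureSet Y n) := by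
  have hfin : hausdorffEDist (curvatureSet X n) (curvatureSet Y n) ≠ ⊤ :=
    hausdorffEDist_ne_top_of_nonempty_of_bounded ⟨_, curvature_mem_curvatureSet x⟩
      (curvatureSet_nonempty Y n) (curvatureSet_finite X n).isBounded
      (curvatureSet_finite Y n).isBounded
  exact (le_infDist_curvatureSet_of_card_lt x hK hn).trans
    (infDist_le_hausdorffDist_of_mem (curvature_mem_curvatureSet x) hfin)

/-- if there is a `d`-bounded curvature `K ∈ K_n(X)` with `d > 0` and
`n > |Y|`, then the Hausdorff distance (w.r.t. the `l∞` matrix distance) between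
`K_n(X)` and `K_n(Y)` is at least `d`. -/
theorem stmt_11 {X Y : Type*} [MetricSpace X] [MetricSpace Y]
    [Fintype X] [Fintype Y] [Nonempty Y] {n : ℕ} {d : ℝ} (hd : 0 < d)
    (x : Fin n → X) (hK : ∀ i j : Fin n, i ≠ j → d ≤ dist (x i) (x j))
    (hn : Fintype.card Y < n) :
    d ≤ Metric.hausdorffDist (curvatureSet X n) (curvatureSet Y n) :=
  stmt_11_general x hK hn
end

section
/- Let X, Y be finite compact metric spaces and suppose K ∈ K_n(X) is d-bounded for some d > 0 with n > |Y|. Then the modified Gromov–Hausdorff distance satisfies d̂_GH(X, Y) ≥ d/2. -/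
/-- The distortion of a map `φ` between metric spaces:
`dis φ = sup_{a,b} |d(a,b) - d(φ a, φ b)|`. -/
noncomputable def mapDistortion {X Y : Type*} [MetricSpace X] [MetricSpace Y]
    (φ : X → Y) : ℝ :=
  ⨆ a : X, ⨆ b : X, |dist a b - dist (φ a) (φ b)|

/-- The modified Gromov–Hausdorff distance
`d̂_GH(X,Y) = (1/2) max {inf_φ dis φ, inf_ψ dis ψ}`. -/
noncomputable def modGH (X Y : Type*) [MetricSpace X] [MetricSpace Y] : ℝ :=
  (1 / 2) * max (⨅ φ : X → Y, mapDistortion φ) (⨅ ψ : Y → X, mapDistortion ψ)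

/-
A map from `X` into a space with fewer than `n` points must identify two of `n` points that are
pairwise at distance at least `d`; that single pair already has distortion at least `d`. Hence
every map `X → Y` has distortion at least `d`, and `d̂_GH(X, Y) ≥ d / 2`.
-/

section Distortion

variable {X Y : Type*} [MetricSpace X] [MetricSpace Y]

theorem abs_dist_sub_dist_le_mapDistortion [Finite X] (φ : X → Y) (a b : X) :
    |dist a b - dist (φ a) (φ b)| ≤ mapDistortion φ :=
  (le_ciSup (Set.finite_range _).bddAbove b).trans
    (le_ciSup (f := fun a : X => ⨆ b : X, |dist a b - dist (φ a) (φ b)|)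
      (Set.finite_range _).bddAbove a)

theorem dist_le_mapDistortion_of_map_eq [Finite X] (φ : X → Y) {a b : X} (h : φ a = φ b) :
    dist a b ≤ mapDistortion φ := by
  simpa [h] using abs_dist_sub_dist_le_mapDistortion φ a b

theorem le_mapDistortion_of_separated_of_card_lt [Finite X] [Fintype Y] {ι : Type*}
    [Fintype ι] {d : ℝ} (x : ι → X) (hx : ∀ i j, i ≠ j → d ≤ dist (x i) (x j))
    (hcard : Fintype.card Y < Fintype.card ι) (φ : X → Y) :
    d ≤ mapDistortion φ := by
  obtain ⟨i, j, hij, hφ⟩ := Fintype.exists_ne_map_eq_of_card_lt (φ ∘ x) hcard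
  exact (hx i j hij).trans (dist_le_mapDistortion_of_map_eq φ hφ)

theorem half_le_modGH_of_le_mapDistortion [Nonempty Y] {c : ℝ}
    (h : ∀ φ : X → Y, c ≤ mapDistortion φ) : c / 2 ≤ modGH X Y := by
  have : c ≤ ⨅ φ : X → Y, mapDistortion φ := le_ciInf h
  unfold modGH
  linarith [le_max_left (⨅ φ : X → Y, mapDistortion φ) (⨅ ψ : Y → X, mapDistortion ψ)]

end Distortion

theorem stmt_12_general {X Y : Type*} [MetricSpace X] [MetricSpace Y]
    [Fintype X] [Fintype Y] [Nonempty Y] {n : ℕ} {d : ℝ}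
    (x : Fin n → X) (hK : ∀ i j : Fin n, i ≠ j → d ≤ dist (x i) (x j))
    (hn : Fintype.card Y < n) :
    d / 2 ≤ modGH X Y :=
  half_le_modGH_of_le_mapDistortion <|
    le_mapDistortion_of_separated_of_card_lt x hK (by rwa [Fintype.card_fin])

/-- Theorem 1 of the paper: if `K ∈ K_n(X)` is `d`-bounded for some `d > 0`
and `n > |Y|`, then `d̂_GH(X,Y) ≥ d/2`. -/
theorem stmt_12 {X Y : Type*} [MetricSpace X] [MetricSpace Y]
    [Fintype X] [Fintype Y] [Nonempty X] [Nonempty Y] {n : ℕ} {d : ℝ} (hd : 0 < d)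
    (x : Fin n → X) (hK : ∀ i j : Fin n, i ≠ j → d ≤ dist (x i) (x j))
    (hn : Fintype.card Y < n) :
    d / 2 ≤ modGH X Y :=
  stmt_12_general x hK hn
end

section
/- Let X, Y be finite metric spaces, K ∈ K_n(X) be d-bounded for some d > 0, with n ≤ |Y|. If there exists a row index i ∈ {1,…,n} such that for every matrix L that is a permutation similarity of an n×n principal submatrix of D^Y, the l∞ distance between the i-th rows of K and L is ≥ d, then d_{l∞}(K, K_n(Y)) ≥ d, i.e., every L ∈ K_n(Y) satisfies d_{l∞}(K, L) ≥ d. -/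
theorem le_ciSup₂_of_le_of_finite {ι κ α : Type*} [Finite ι] [Finite κ]
    [ConditionallyCompleteLattice α] {f : ι → κ → α} {a : α} (i : ι) (j : κ)
    (h : a ≤ f i j) : a ≤ ⨆ i, ⨆ j, f i j :=
  le_ciSup_of_le (Finite.bddAbove_range _) i (le_ciSup_of_le (Finite.bddAbove_range _) j h)

theorem le_abs_dist_sub_dist_of_eq {X Y : Type*} [PseudoMetricSpace X] [PseudoMetricSpace Y]
    {a b : X} {c e : Y} {d : ℝ} (hab : d ≤ dist a b) (hce : c = e) :
    d ≤ |dist a b - dist c e| := by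
  rw [hce, dist_self, sub_zero]
  exact hab.trans (le_abs_self _)

theorem stmt_13_general {X Y : Type*} [MetricSpace X] [MetricSpace Y]
    {n : ℕ} {d : ℝ}
    (x : Fin n → X) (hK : ∀ i j : Fin n, i ≠ j → d ≤ dist (x i) (x j))
    (h : ∃ i : Fin n, ∀ σ : Fin n → Y, Function.Injective σ →
      d ≤ ⨆ k : Fin n, |dist (x i) (x k) - dist (σ i) (σ k)|) :
    ∀ y : Fin n → Y,
      d ≤ ⨆ i : Fin n, ⨆ j : Fin n, |dist (x i) (x j) - dist (y i) (y j)| := by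
  obtain ⟨i, hi⟩ := h
  intro y
  by_cases hy : Function.Injective y
  · exact le_ciSup_of_le (Finite.bddAbove_range _) i (hi y hy)
  · obtain ⟨j, k, hyjk, hjk⟩ : ∃ j k, y j = y k ∧ j ≠ k := by
      simpa [Function.Injective] using hy
    exact le_ciSup₂_of_le_of_finite j k (le_abs_dist_sub_dist_of_eq (hK j k hjk) hyjk)

/-- Lemma 1 of the paper: let `K ∈ K_n(X)` be the `d`-bounded curvature of
the tuple `x`, with `d > 0` and `n ≤ |Y|`. If some row index `i` satisfies
`‖row_i(K) - row_i(L)‖_∞ ≥ d` for every `L ∈ PSPS^n(D^Y)` (i.e. every matrix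
`L = (d_Y(σ j, σ k))` with `σ : Fin n → Y` injective), then every curvature
`L ∈ K_n(Y)` (given by an arbitrary tuple `y : Fin n → Y`) satisfies
`d_{l∞}(K, L) ≥ d`. -/
theorem stmt_13 {X Y : Type*} [MetricSpace X] [MetricSpace Y]
    [Fintype X] [Fintype Y] {n : ℕ} {d : ℝ} (hd : 0 < d)
    (x : Fin n → X) (hK : ∀ i j : Fin n, i ≠ j → d ≤ dist (x i) (x j))
    (hn : n ≤ Fintype.card Y)
    (h : ∃ i : Fin n, ∀ σ : Fin n → Y, Function.Injective σ →
      d ≤ ⨆ k : Fin n, |dist (x i) (x k) - dist (σ i) (σ k)|) :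
    ∀ y : Fin n → Y,
      d ≤ ⨆ i : Fin n, ⨆ j : Fin n, |dist (x i) (x j) - dist (y i) (y j)| :=
  stmt_13_general x hK h
end

section
/- Let v ∈ ℝ^p and u ∈ ℝ^q have entries sorted in ascending order: v_1 ≤ … ≤ v_p and u_1 ≤ … ≤ u_q, and let d > 0. Then there exists a strictly increasing map f : {1,…,p} → {1,…,q} with |v_k - u_{f(k)}| < d for all k if and only if there exists any injective map g : {1,…,p} → {1,…,q} with |v_k - u_{g(k)}| < d for all k. -/
/-!
Sorting the values of an injective feasible assignment `g` gives a strictly increasing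
`f = g ∘ σ` for a permutation `σ`. For each `k`, pigeonhole yields some `j ≤ k` with `σ⁻¹ j ≥ k`
and some `j' ≥ k` with `σ⁻¹ j' ≤ k`; since `v` and `u ∘ f` are monotone, the feasible differences
`v j - u (g j)` and `v j' - u (g j')` bound `v k - u (f k)` from below and from above.
-/

open Finset Function

theorem exists_le_le_apply_of_injective {α : Type*} [LinearOrder α] [LocallyFiniteOrderBot α]
    {τ : α → α} (hτ : Injective τ) (k : α) : ∃ j ≤ k, k ≤ τ j := by
  by_contra! h
  have hmaps : Set.MapsTo τ (Iic k : Set α) (Iio k : Set α) := fun j hj =>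
    mem_Iio.2 (h j (mem_Iic.1 hj))
  have hcard := card_le_card_of_injOn τ hmaps hτ.injOn
  rw [Iic_eq_cons_Iio, card_cons] at hcard
  omega

theorem exists_le_apply_le_of_injective {α : Type*} [LinearOrder α] [LocallyFiniteOrderTop α]
    {τ : α → α} (hτ : Injective τ) (k : α) : ∃ j, k ≤ j ∧ τ j ≤ k :=
  exists_le_le_apply_of_injective (α := αᵒᵈ) hτ k

theorem abs_sub_lt_of_injective_reindex {ι β : Type*} [LinearOrder ι] [LocallyFiniteOrderBot ι]
    [LocallyFiniteOrderTop ι] [AddCommGroup β] [LinearOrder β] [IsOrderedAddMonoid β]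
    {v w : ι → β} (hv : Monotone v) (hw : Monotone w) {τ : ι → ι} (hτ : Injective τ) {d : β}
    (h : ∀ j, |v j - w (τ j)| < d) (k : ι) : |v k - w k| < d := by
  obtain ⟨j, hjk, hkτ⟩ := exists_le_le_apply_of_injective hτ k
  obtain ⟨j', hkj', hτk⟩ := exists_le_apply_le_of_injective hτ k
  refine abs_lt.2 ⟨?_, ?_⟩
  · calc -d < v j - w (τ j) := (abs_lt.1 (h j)).1
      _ ≤ v k - w k := sub_le_sub (hv hjk) (hw hkτ)
  · calc v k - w k ≤ v j' - w (τ j') := sub_le_sub (hv hkj') (hw hτk)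
      _ < d := (abs_lt.1 (h j')).2

theorem stmt_16_general {p q : ℕ} (v : Fin p → ℝ) (u : Fin q → ℝ)
    (hv : Monotone v) (hu : Monotone u) (d : ℝ) :
    (∃ f : Fin p → Fin q, StrictMono f ∧ ∀ k, |v k - u (f k)| < d) ↔
      (∃ g : Fin p → Fin q, Function.Injective g ∧ ∀ k, |v k - u (g k)| < d) := by
  refine ⟨fun ⟨f, hf, hfd⟩ => ⟨f, hf.injective, hfd⟩, fun ⟨g, hg, hgd⟩ => ?_⟩
  set σ := Tuple.sort g
  have hsorted : StrictMono (g ∘ σ) :=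
    (Tuple.monotone_sort g).strictMono_of_injective (hg.comp σ.injective)
  refine ⟨g ∘ σ, hsorted, abs_sub_lt_of_injective_reindex hv (hu.comp hsorted.monotone)
    σ.symm.injective fun j => ?_⟩
  simpa using hgd j

/-- for sorted vectors `v ∈ ℝ^p`, `u ∈ ℝ^q` and `d > 0`, there is a strictly
increasing feasible assignment `f` (with `|v k - u (f k)| < d` for all `k`) if and only if
there is any injective feasible assignment. -/
theorem stmt_16 {p q : ℕ} (v : Fin p → ℝ) (u : Fin q → ℝ)
    (hv : Monotone v) (hu : Monotone u) (d : ℝ) (hd : 0 < d) :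
    (∃ f : Fin p → Fin q, StrictMono f ∧ ∀ k, |v k - u (f k)| < d) ↔
      (∃ g : Fin p → Fin q, Function.Injective g ∧ ∀ k, |v k - u (g k)| < d) :=
  stmt_16_general v u hv hu d
end

section
/- Let v ∈ ℝ^p and u ∈ ℝ^q be sorted ascending, d > 0. Define the greedy assignment: process k = 1,…,p, assigning v_k to the smallest-index unassigned u_h with |v_k - u_h| < d (entries u_h with u_h ≤ v_k - d are permanently discarded). The greedy procedure succeeds (assigns all of v) if and only if there exists an injective f : {1,…,p} → {1,…,q} with |v_k - u_{f(k)}| < d for all k. -/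
/-
The relation `|v - u| < d` is closed under crossing: for `v ≤ v'` and `u ≤ u'`, if `v` is close
to `u'` and `v'` to `u`, then `v'` is close to `u'`. So when the smallest entries `v` and `u` are
close, any matching can be rerouted to send `v` to `u`, leaving a matching of the tails. When
`u ≤ v - d`, no entry of the sorted `vs` can use `u`; when `u ≥ v + d`, no entry of the sorted
`us` is close to `v`. Induction on the two lists follows the greedy recursion.
-/

/-- The greedy assignment procedure of `SolveFeasibleAssignment`: processing the sorted
entries of `v` in order, each entry `v_k` is matched to the smallest-index remaining entry
`u_h` with `|v_k - u_h| < d`; entries `u_h ≤ v_k - d` are permanently discarded, and the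
procedure fails if an entry `v_k` cannot be matched. `greedy d vs us` holds iff the
procedure succeeds in assigning all of `vs` into `us`. -/
def greedy (d : ℝ) : List ℝ → List ℝ → Prop
  | [], _ => True
  | _ :: _, [] => False
  | v :: vs, u :: us =>
    (|v - u| < d ∧ greedy d vs us) ∨
      (¬ |v - u| < d ∧ u ≤ v - d ∧ greedy d (v :: vs) us)
termination_by l₁ l₂ => l₁.length + l₂.length

section Matching

variable {α β : Type*}

def AdmitsMatching (r : α → β → Prop) (as : List α) (bs : List β) : Prop :=
  ∃ f : Fin as.length → Fin bs.length, Function.Injective f ∧ ∀ k, r (as.get k) (bs.get (f k))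

namespace AdmitsMatching

variable {r : α → β → Prop} {a : α} {b : β} {as : List α} {bs : List β}

theorem nil_left : AdmitsMatching r [] bs :=
  ⟨finZeroElim, fun k => k.elim0, fun k => k.elim0⟩

theorem not_cons_of_forall_not_rel (h : ∀ b ∈ bs, ¬ r a b) : ¬ AdmitsMatching r (a :: as) bs :=
  fun ⟨_, _, hr⟩ => h _ (List.get_mem _ _) (hr 0)

theorem cons (hab : r a b) (h : AdmitsMatching r as bs) :
    AdmitsMatching r (a :: as) (b :: bs) := by
  obtain ⟨f, hf, hr⟩ := h
  refine ⟨Fin.cons 0 (Fin.succ ∘ f), ?_, Fin.cases hab fun k => hr k⟩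
  exact Fin.cons_injective_iff.2 ⟨by simp [Fin.succ_ne_zero], (Fin.succ_injective _).comp hf⟩

theorem cons_right (h : AdmitsMatching r as bs) : AdmitsMatching r as (b :: bs) := by
  obtain ⟨f, hf, hr⟩ := h
  exact ⟨Fin.succ ∘ f, (Fin.succ_injective _).comp hf, hr⟩

theorem of_forall_ne_zero (b : β) {f : Fin as.length → Fin (bs.length + 1)}
    (hf : Function.Injective f) (h0 : ∀ k, f k ≠ 0)
    (hr : ∀ k, r (as.get k) ((b :: bs).get (f k))) :
    AdmitsMatching r as bs := by
  refine ⟨fun k => (f k).pred (h0 k), fun k l hkl => hf ?_, fun k => ?_⟩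
  · simpa using congrArg Fin.succ hkl
  · have hk := hr k
    rwa [← Fin.succ_pred (f k) (h0 k), List.get_cons_succ'] at hk

theorem of_cons_right (h : AdmitsMatching r as (b :: bs)) (hb : ∀ a ∈ as, ¬ r a b) :
    AdmitsMatching r as bs := by
  obtain ⟨f, hf, hr⟩ := h
  refine of_forall_ne_zero b hf (fun k hk => hb (as.get k) (List.get_mem as k) ?_) hr
  simpa [hk] using hr k

theorem of_cons_cons
    (hcross : ∀ a' ∈ as, ∀ b' ∈ b :: bs, r a b' → r a' b → r a' b')
    (h : AdmitsMatching r (a :: as) (b :: bs)) : AdmitsMatching r as bs := by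
  obtain ⟨f, hf, hr⟩ := h
  set g := Equiv.swap (f 0) 0 ∘ f
  have hg : Function.Injective g := (Equiv.injective _).comp hf
  have hg0 : g 0 = 0 := Equiv.swap_apply_left _ _
  refine of_forall_ne_zero b (f := g ∘ Fin.succ) (hg.comp (Fin.succ_injective _))
    (fun k hk => Fin.succ_ne_zero k (hg (hk.trans hg0.symm))) fun k => ?_
  by_cases hk : f k.succ = 0
  · have : g k.succ = f 0 := by simp [g, hk]
    simp only [Function.comp_apply, this]
    exact hcross _ (List.get_mem _ _) _ (List.get_mem _ _) (hr 0) (by simpa [hk] using hr k.succ)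
  · have hne : f k.succ ≠ f 0 := fun h => Fin.succ_ne_zero k (hf h)
    have : g k.succ = f k.succ := Equiv.swap_apply_of_ne_of_ne hne hk
    simpa [this] using hr k.succ

end AdmitsMatching

end Matching

theorem List.Pairwise.le_of_mem_cons {γ : Type*} [Preorder γ] {c : γ} {l : List γ}
    (h : (c :: l).Pairwise (· ≤ ·)) : ∀ x ∈ c :: l, c ≤ x :=
  List.forall_mem_cons.2 ⟨le_rfl, fun _ => List.rel_of_pairwise_cons h⟩

theorem abs_sub_lt_of_crossing {K : Type*} [AddCommGroup K] [LinearOrder K] [IsOrderedAddMonoid K]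
    {d v v' u u' : K} (hv : v ≤ v') (hu : u ≤ u') (h₁ : |v - u'| < d) (h₂ : |v' - u| < d) :
    |v' - u'| < d := by
  rw [abs_lt] at *
  exact ⟨h₁.1.trans_le (sub_le_sub_right hv u'), (sub_le_sub_left hu v').trans_lt h₂.2⟩

theorem greedy_iff_admitsMatching {d : ℝ} {vs us : List ℝ} (hv : vs.Pairwise (· ≤ ·))
    (hu : us.Pairwise (· ≤ ·)) :
    greedy d vs us ↔ AdmitsMatching (fun v u => |v - u| < d) vs us := by
  induction us generalizing vs with
  | nil =>
    cases vs with
    | nil => simpa [greedy] using AdmitsMatching.nil_left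
    | cons v vs => simpa [greedy] using AdmitsMatching.not_cons_of_forall_not_rel (by simp)
  | cons u us ih =>
    cases vs with
    | nil => simpa [greedy] using AdmitsMatching.nil_left
    | cons v vs =>
      have hv₀ := hv.le_of_mem_cons
      have hu₀ := hu.le_of_mem_cons
      rw [greedy, ih hv.of_cons hu.of_cons, ih hv hu.of_cons]
      by_cases hvu : |v - u| < d
      · simp only [hvu, true_and, not_true_eq_false, false_and, or_false]
        exact ⟨(·.cons hvu), .of_cons_cons fun v' hv' u' hu' =>
          abs_sub_lt_of_crossing (hv₀ v' (List.mem_cons_of_mem v hv')) (hu₀ u' hu')⟩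
      rcases le_or_gt u (v - d) with hud | hud
      · simp only [hvu, hud, false_and, not_false_eq_true, true_and, false_or]
        refine ⟨.cons_right, fun h => h.of_cons_right fun v' hv' hv'u => ?_⟩
        linarith [hv₀ v' hv', (abs_lt.1 hv'u).2]
      · simp only [hvu, not_le.2 hud, false_and, and_false, or_self, false_iff]
        have huv : v + d ≤ u := by
          rw [abs_lt, not_and_or] at hvu
          rcases hvu with h | h <;> linarith
        refine AdmitsMatching.not_cons_of_forall_not_rel fun u' hu' hvu' => ?_
        linarith [hu₀ u' hu', (abs_lt.1 hvu').1]

theorem stmt_17_general (d : ℝ) (vs us : List ℝ)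
    (hv : vs.Pairwise (· ≤ ·)) (hu : us.Pairwise (· ≤ ·)) :
    greedy d vs us ↔
      ∃ f : Fin vs.length → Fin us.length, Function.Injective f ∧
        ∀ k, |vs.get k - us.get (f k)| < d :=
  greedy_iff_admitsMatching hv hu

/-- for ascending `vs` and `us` and `d > 0`, the greedy procedure succeeds
iff there exists an injective assignment `f` with `|vs_k - us_{f k}| < d` for all `k`. -/
theorem stmt_17 (d : ℝ) (hd : 0 < d) (vs us : List ℝ)
    (hv : vs.Pairwise (· ≤ ·)) (hu : us.Pairwise (· ≤ ·)) :
    greedy d vs us ↔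
      ∃ f : Fin vs.length → Fin us.length, Function.Injective f ∧
        ∀ k, |vs.get k - us.get (f k)| < d :=
  stmt_17_general d vs us hv hu
end
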